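/- Abstract twirling identity: let Λ be a finite set of self-adjoint unitaries, Q a finite set of operators with Tr(a·b) = Ξ·δ_{a,b} for a,b ∈ Q (Ξ ∈ ℝ, Ξ ≠ 0), such that every λ ∈ Λ and γ ∈ Q satisfy λγ = ξ(γ,λ) γλ with ξ(γ,λ) ∈ {1,-1}, and such that for all γ₁, γ₂ ∈ Q, Σ_{λ∈Λ} ξ(γ₁γ₂, λ) = δ_{γ₁,γ₂}·|Λ| (where ξ(γ₁γ₂,λ) := ξ(γ₁,λ)ξ(γ₂,λ)). Then for any operator K of the form K = Σ_{γ∈Q} c_γ γ, and any ρ, the averaged conjugation (1/|Λ|) Σ_{λ∈Λ} λ K λ ρ λ K† λ equals Σ_{γ∈Q} |c_γ|² γ ρ γ†. -/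
import Mathlib


open Matrix

/-- Abstract twirling identity: conjugating an operator `K = Σ_{γ∈Q} c_γ γ` by
uniformly random self-adjoint unitaries from `Λ` (with commutator signs `ξ` and the
`Λ`-summation/orthogonality conditions) reduces it to the stochastic form
`Σ_{γ∈Q} |c_γ|² γ ρ γ†`. -/
theorem abstract_twirling {d : ℕ}
    (Λ Q : Finset (Matrix (Fin d) (Fin d) ℂ)) (hΛne : Λ.Nonempty)
    (hΛ : ∀ l ∈ Λ, lᴴ = l ∧ l * l = 1)
    (Ξ : ℝ) (hΞ : Ξ ≠ 0)
    (htr : ∀ a ∈ Q, ∀ b ∈ Q, (a * b).trace = if a = b then (Ξ : ℂ) else 0)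
    (ξ : Matrix (Fin d) (Fin d) ℂ → Matrix (Fin d) (Fin d) ℂ → ℂ)
    (hξval : ∀ γ ∈ Q, ∀ l ∈ Λ, ξ γ l = 1 ∨ ξ γ l = -1)
    (hξ : ∀ γ ∈ Q, ∀ l ∈ Λ, l * γ = ξ γ l • (γ * l))
    (hsum : ∀ γ₁ ∈ Q, ∀ γ₂ ∈ Q,
      ∑ l ∈ Λ, ξ γ₁ l * ξ γ₂ l = if γ₁ = γ₂ then (Λ.card : ℂ) else 0)
    (c : Matrix (Fin d) (Fin d) ℂ → ℂ)
    (K : Matrix (Fin d) (Fin d) ℂ) (hK : K = ∑ γ ∈ Q, c γ • γ)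
    (ρ : Matrix (Fin d) (Fin d) ℂ) :
    (Λ.card : ℂ)⁻¹ • ∑ l ∈ Λ, l * K * l * ρ * (l * Kᴴ * l)
      = ∑ γ ∈ Q, (Complex.normSq (c γ) : ℂ) • (γ * ρ * γᴴ) := by
  classical
  have hcard : (Λ.card : ℂ) ≠ 0 := by
    exact_mod_cast Nat.cast_ne_zero.mpr (Finset.card_ne_zero_of_mem hΛne.choose_spec)
  have hc1 : ∀ γ ∈ Q, ∀ l ∈ Λ, l * γ * l = ξ γ l • γ := by
    intro γ hγ l hl
    rw [hξ γ hγ l hl, smul_mul_assoc, mul_assoc, (hΛ l hl).2, mul_one]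
  have hξconj : ∀ γ ∈ Q, ∀ l ∈ Λ, star (ξ γ l) = ξ γ l := by
    intro γ hγ l hl
    rcases hξval γ hγ l hl with h | h <;> rw [h] <;> simp
  have hc2 : ∀ γ ∈ Q, ∀ l ∈ Λ, l * γᴴ * l = ξ γ l • γᴴ := by
    intro γ hγ l hl
    have h := congrArg conjTranspose (hc1 γ hγ l hl)
    rw [conjTranspose_mul, conjTranspose_mul, (hΛ l hl).1, conjTranspose_smul,
      hξconj γ hγ l hl, ← mul_assoc] at h
    exact h
  have hKl : ∀ l ∈ Λ, l * K * l = ∑ γ ∈ Q, (c γ * ξ γ l) • γ := by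
    intro l hl
    rw [hK, Finset.mul_sum, Finset.sum_mul]
    refine Finset.sum_congr rfl fun γ hγ => ?_
    rw [mul_smul_comm, smul_mul_assoc, hc1 γ hγ l hl, smul_smul, mul_comm]
  have hKHl : ∀ l ∈ Λ, l * Kᴴ * l = ∑ γ ∈ Q, (star (c γ) * ξ γ l) • γᴴ := by
    intro l hl
    rw [hK, conjTranspose_sum, Finset.mul_sum, Finset.sum_mul]
    refine Finset.sum_congr rfl fun γ hγ => ?_
    rw [conjTranspose_smul, mul_smul_comm, smul_mul_assoc, hc2 γ hγ l hl, smul_smul, mul_comm]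
  have key : ∑ l ∈ Λ, l * K * l * ρ * (l * Kᴴ * l)
      = ∑ γ₁ ∈ Q, ∑ γ₂ ∈ Q,
          ((c γ₁ * star (c γ₂)) * ∑ l ∈ Λ, ξ γ₁ l * ξ γ₂ l) • (γ₁ * ρ * γ₂ᴴ) := by
    have step : ∀ l ∈ Λ, l * K * l * ρ * (l * Kᴴ * l)
        = ∑ γ₁ ∈ Q, ∑ γ₂ ∈ Q,
            ((c γ₁ * star (c γ₂)) * (ξ γ₁ l * ξ γ₂ l)) • (γ₁ * ρ * γ₂ᴴ) := by
      intro l hl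
      rw [hKl l hl, hKHl l hl, Finset.sum_mul, Finset.sum_mul]
      refine Finset.sum_congr rfl fun γ₁ h₁ => ?_
      rw [Finset.mul_sum]
      refine Finset.sum_congr rfl fun γ₂ h₂ => ?_
      simp only [smul_mul_assoc, mul_smul_comm, smul_smul]
      congr 1
      ring
    rw [Finset.sum_congr rfl step, Finset.sum_comm]
    refine Finset.sum_congr rfl fun γ₁ h₁ => ?_
    rw [Finset.sum_comm]
    refine Finset.sum_congr rfl fun γ₂ h₂ => ?_
    rw [← Finset.sum_smul, ← Finset.mul_sum]
  rw [key, Finset.smul_sum]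
  refine Finset.sum_congr rfl fun γ₁ h₁ => ?_
  rw [Finset.sum_eq_single_of_mem γ₁ h₁ (fun b hb hne => by
    rw [hsum γ₁ h₁ b hb, if_neg (fun h => hne h.symm), mul_zero, zero_smul])]
  rw [hsum γ₁ h₁ γ₁ h₁, if_pos rfl, smul_smul]
  congr 1
  have hn : c γ₁ * star (c γ₁) = (Complex.normSq (c γ₁) : ℂ) := Complex.mul_conj _
  rw [hn]
  field_simp
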